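/- Let χ₁ and χ₂ be orthonormal vectors in ℂ²⊗ℂ² (⟨χ₁, χ₂⟩ = 0, ‖χ₁‖ = ‖χ₂‖ = 1) such that Tr₁ |χ₁⟩⟨χ₁| = Tr₁ |χ₂⟩⟨χ₂| and Tr₂ |χ₁⟩⟨χ₁| = Tr₂ |χ₂⟩⟨χ₂|. Then both χ₁ and χ₂ are maximally entangled: Tr₁ |χᵢ⟩⟨χᵢ| = (1/2)·I₂ and Tr₂ |χᵢ⟩⟨χᵢ| = (1/2)·I₂ for i = 1, 2, where I₂ is the 2×2 identity matrix. That is, masking two orthogonal pure qubit states requires the masked states to be maximally entangled. -/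

import Mathlib

open Matrix Kronecker Polynomial ComplexOrder

noncomputable section

/-- Partial trace over the first subsystem of a two-qubit (4×4) matrix. -/
def ptr1 (M : Matrix (Fin 2 × Fin 2) (Fin 2 × Fin 2) ℂ) : Matrix (Fin 2) (Fin 2) ℂ :=
  Matrix.of fun j l => ∑ i, M (i, j) (i, l)

/-- Partial trace over the second subsystem of a two-qubit (4×4) matrix. -/
def ptr2 (M : Matrix (Fin 2 × Fin 2) (Fin 2 × Fin 2) ℂ) : Matrix (Fin 2) (Fin 2) ℂ :=
  Matrix.of fun i k => ∑ j, M (i, j) (k, j)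

/-- Rank-one projection |v⟩⟨v| of a qubit vector. -/
def proj2 (v : Fin 2 → ℂ) : Matrix (Fin 2) (Fin 2) ℂ :=
  Matrix.of fun i j => v i * star (v j)

/-- Rank-one projection |v⟩⟨v| of a two-qubit vector. -/
def proj4 (v : Fin 2 × Fin 2 → ℂ) : Matrix (Fin 2 × Fin 2) (Fin 2 × Fin 2) ℂ :=
  Matrix.of fun p q => v p * star (v q)

/-- Kronecker (tensor) product of two qubit vectors. -/
def tens (a b : Fin 2 → ℂ) : Fin 2 × Fin 2 → ℂ := fun p => a p.1 * b p.2

/-- Unit (normalized) vector. -/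
def UnitVec {α : Type*} [Fintype α] (v : α → ℂ) : Prop := ∑ i, v i * star (v i) = 1

/-- Hermitian inner product of two-qubit vectors. -/
def inner4 (v w : Fin 2 × Fin 2 → ℂ) : ℂ := ∑ p, star (v p) * w p

/-- A 2×2 density matrix: positive semidefinite with unit trace. -/
def IsDensity2 (A : Matrix (Fin 2) (Fin 2) ℂ) : Prop := A.PosSemidef ∧ A.trace = 1

/-- Separability of a two-qubit density matrix: a finite convex combination of
Kronecker products of 2×2 density matrices. -/
def Separable4 (ρ : Matrix (Fin 2 × Fin 2) (Fin 2 × Fin 2) ℂ) : Prop :=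
  ∃ (n : ℕ) (w : Fin n → ℝ) (A B : Fin n → Matrix (Fin 2) (Fin 2) ℂ),
    (∀ i, 0 ≤ w i) ∧ (∑ i, w i = 1) ∧
    (∀ i, IsDensity2 (A i)) ∧ (∀ i, IsDensity2 (B i)) ∧
    ρ = ∑ i, (w i : ℂ) • (A i ⊗ₖ B i)

/-- Standard basis vector e₀ of ℂ². -/
def e₀ : Fin 2 → ℂ := ![1, 0]

/-- Standard basis vector e₁ of ℂ². -/
def e₁ : Fin 2 → ℂ := ![0, 1]

/-!
Write a two-qubit vector as `χ = ∑ i j, X i j • eᵢ ⊗ eⱼ`. Then `Tr₂ |χ⟩⟨χ| = X Xᴴ`,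
`Tr₁ |χ⟩⟨χ| = (Xᴴ X)ᵀ` and `⟨χ₂, χ₁⟩ = tr (X₁ X₂ᴴ)`. For masked orthogonal states put
`P = X₁ X₁ᴴ = X₂ X₂ᴴ` and `S = X₁ X₂ᴴ`: orthogonality makes `S` traceless, and the equality of
both reduced states gives `S Sᴴ = Sᴴ S = P²`. A traceless normal 2×2 matrix has eigenvalues `±λ`,
so `Sᴴ S` and hence `P²` is scalar; by Cayley–Hamilton `P` itself is then scalar, and `tr P = 1`
forces `P = I/2`. Replacing `Xᵢ` by `Xᵢᴴ` gives the other reduced state.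
-/

namespace Matrix

theorem mul_conjTranspose_mul_self_eq_of_conjTranspose_mul_self_eq {m n R : Type*}
    [Fintype m] [Fintype n] [NonUnitalSemiring R] [StarRing R]
    {X₁ X₂ : Matrix m n R} (hQ : X₁ᴴ * X₁ = X₂ᴴ * X₂) :
    X₁ * X₂ᴴ * (X₁ * X₂ᴴ)ᴴ = X₁ * X₁ᴴ * (X₁ * X₁ᴴ) := by
  simp only [conjTranspose_mul, conjTranspose_conjTranspose]
  calc X₁ * X₂ᴴ * (X₂ * X₁ᴴ) = X₁ * (X₂ᴴ * X₂) * X₁ᴴ := by simp only [Matrix.mul_assoc]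
    _ = X₁ * X₁ᴴ * (X₁ * X₁ᴴ) := by rw [← hQ]; simp only [Matrix.mul_assoc]

section TwoByTwo

variable {K : Type*} [Field K] [NeZero (2 : K)]

theorem eq_half_smul_one_of_mul_self_eq_smul_one {P : Matrix (Fin 2) (Fin 2) K} {c : K}
    (hsq : P * P = c • 1) (htr : P.trace = 1) : P = (1 / 2 : K) • 1 := by
  rw [trace_fin_two] at htr
  rw [← Matrix.ext_iff, Fin.forall_fin_two, Fin.forall_fin_two, Fin.forall_fin_two] at hsq
  simp only [mul_apply, Fin.sum_univ_two, smul_apply, one_apply_eq, one_apply_ne zero_ne_one,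
    one_apply_ne one_ne_zero, smul_eq_mul, mul_zero, mul_one] at hsq
  obtain ⟨⟨h00, h01⟩, h10, h11⟩ := hsq
  have p01 : P 0 1 = 0 := by linear_combination h01 - P 0 1 * htr
  have p10 : P 1 0 = 0 := by linear_combination h10 - P 1 0 * htr
  have hdiag : P 0 0 = P 1 1 := by linear_combination h00 - h11 - (P 0 0 - P 1 1) * htr
  have p00 : P 0 0 = 1 / 2 := eq_div_of_mul_eq two_ne_zero (by linear_combination htr + hdiag)
  have p11 : P 1 1 = 1 / 2 := eq_div_of_mul_eq two_ne_zero (by linear_combination htr - hdiag)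
  ext i j
  fin_cases i <;> fin_cases j <;> simp [p00, p01, p10, p11]

variable [StarRing K]

theorem exists_conjTranspose_mul_self_eq_smul_one {S : Matrix (Fin 2) (Fin 2) K}
    (htr : S.trace = 0) (hnormal : Sᴴ * S = S * Sᴴ) : ∃ c : K, Sᴴ * S = c • 1 := by
  rw [trace_fin_two] at htr
  have h11 : S 1 1 = -S 0 0 := by linear_combination htr
  rw [← Matrix.ext_iff, Fin.forall_fin_two, Fin.forall_fin_two, Fin.forall_fin_two] at hnormal
  simp only [mul_apply, Fin.sum_univ_two, conjTranspose_apply, h11, star_neg] at hnormal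
  obtain ⟨⟨h00, h01⟩, h10, -⟩ := hnormal
  have off01 : star (S 0 0) * S 0 1 - S 0 0 * star (S 1 0) = 0 :=
    (mul_eq_zero.mp (by linear_combination h01 : (2 : K) * _ = 0)).resolve_left two_ne_zero
  have off10 : star (S 0 1) * S 0 0 - star (S 0 0) * S 1 0 = 0 :=
    (mul_eq_zero.mp (by linear_combination h10 : (2 : K) * _ = 0)).resolve_left two_ne_zero
  refine ⟨star (S 0 0) * S 0 0 + star (S 0 1) * S 0 1, ?_⟩
  ext i j
  fin_cases i <;> fin_cases j <;>
    simp only [Fin.zero_eta, Fin.mk_one, mul_apply, conjTranspose_apply, Fin.sum_univ_two, h11,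
      star_neg, smul_apply, one_apply_eq, one_apply_ne zero_ne_one, one_apply_ne one_ne_zero,
      smul_eq_mul, mul_one, mul_zero]
  · linear_combination h00
  · linear_combination off01
  · linear_combination off10
  · ring

theorem mul_conjTranspose_self_eq_half_smul_one_of_masking {X₁ X₂ : Matrix (Fin 2) (Fin 2) K}
    (hP : X₁ * X₁ᴴ = X₂ * X₂ᴴ) (hQ : X₁ᴴ * X₁ = X₂ᴴ * X₂)
    (horth : (X₁ * X₂ᴴ).trace = 0) (hnorm : (X₁ * X₁ᴴ).trace = 1) :
    X₁ * X₁ᴴ = (1 / 2 : K) • 1 := by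
  have hS : X₁ * X₂ᴴ * (X₁ * X₂ᴴ)ᴴ = X₁ * X₁ᴴ * (X₁ * X₁ᴴ) :=
    mul_conjTranspose_mul_self_eq_of_conjTranspose_mul_self_eq hQ
  have hS' : (X₁ * X₂ᴴ)ᴴ * (X₁ * X₂ᴴ) = X₁ * X₁ᴴ * (X₁ * X₁ᴴ) := by
    simpa only [conjTranspose_mul, conjTranspose_conjTranspose, ← hP] using
      mul_conjTranspose_mul_self_eq_of_conjTranspose_mul_self_eq hQ.symm
  obtain ⟨c, hc⟩ := exists_conjTranspose_mul_self_eq_smul_one horth (hS'.trans hS.symm)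
  exact eq_half_smul_one_of_mul_self_eq_smul_one (hS' ▸ hc) hnorm

theorem conjTranspose_mul_self_eq_half_smul_one_of_masking {X₁ X₂ : Matrix (Fin 2) (Fin 2) K}
    (hP : X₁ * X₁ᴴ = X₂ * X₂ᴴ) (hQ : X₁ᴴ * X₁ = X₂ᴴ * X₂)
    (horth : (X₁ * X₂ᴴ).trace = 0) (hnorm : (X₁ * X₁ᴴ).trace = 1) :
    X₁ᴴ * X₁ = (1 / 2 : K) • 1 := by
  have horth' : (X₁ᴴ * X₂ᴴᴴ).trace = 0 := by
    rw [← conjTranspose_mul, trace_conjTranspose, trace_mul_comm, horth, star_zero]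
  simpa only [conjTranspose_conjTranspose] using
    mul_conjTranspose_self_eq_half_smul_one_of_masking (X₁ := X₁ᴴ) (X₂ := X₂ᴴ)
      (by simpa only [conjTranspose_conjTranspose] using hQ)
      (by simpa only [conjTranspose_conjTranspose] using hP) horth'
      (by rwa [conjTranspose_conjTranspose, trace_mul_comm])

end TwoByTwo

end Matrix

def coeffMatrix {m n R : Type*} (χ : m × n → R) : Matrix m n R :=
  Matrix.of (Function.curry χ)

theorem trace_coeffMatrix_mul_conjTranspose {m n R : Type*} [Fintype m] [Fintype n]
    [NonUnitalSemiring R] [StarRing R] (χ φ : m × n → R) :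
    (coeffMatrix χ * (coeffMatrix φ)ᴴ).trace = ∑ p, χ p * star (φ p) := by
  simp [trace, mul_apply, coeffMatrix, Fintype.sum_prod_type]

theorem ptr2_proj4 (χ : Fin 2 × Fin 2 → ℂ) :
    ptr2 (proj4 χ) = coeffMatrix χ * (coeffMatrix χ)ᴴ := by
  ext i k
  simp [ptr2, proj4, coeffMatrix, mul_apply]

theorem ptr1_proj4 (χ : Fin 2 × Fin 2 → ℂ) :
    ptr1 (proj4 χ) = ((coeffMatrix χ)ᴴ * coeffMatrix χ)ᵀ := by
  ext j l
  simp [ptr1, proj4, coeffMatrix, mul_apply, mul_comm]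

theorem masking_orthogonal_states_requires_maximal_entanglement
    (χ₁ χ₂ : Fin 2 × Fin 2 → ℂ)
    (h₁ : UnitVec χ₁)
    (horth : inner4 χ₁ χ₂ = 0)
    (hmask1 : ptr1 (proj4 χ₁) = ptr1 (proj4 χ₂))
    (hmask2 : ptr2 (proj4 χ₁) = ptr2 (proj4 χ₂)) :
    ptr1 (proj4 χ₁) = (1/2 : ℂ) • (1 : Matrix (Fin 2) (Fin 2) ℂ) ∧
    ptr2 (proj4 χ₁) = (1/2 : ℂ) • (1 : Matrix (Fin 2) (Fin 2) ℂ) ∧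
    ptr1 (proj4 χ₂) = (1/2 : ℂ) • (1 : Matrix (Fin 2) (Fin 2) ℂ) ∧
    ptr2 (proj4 χ₂) = (1/2 : ℂ) • (1 : Matrix (Fin 2) (Fin 2) ℂ) := by
  have hP : coeffMatrix χ₁ * (coeffMatrix χ₁)ᴴ = coeffMatrix χ₂ * (coeffMatrix χ₂)ᴴ := by
    simpa only [ptr2_proj4] using hmask2
  have hQ : (coeffMatrix χ₁)ᴴ * coeffMatrix χ₁ = (coeffMatrix χ₂)ᴴ * coeffMatrix χ₂ := by
    simpa only [ptr1_proj4, transpose_inj] using hmask1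
  have hnorm : (coeffMatrix χ₁ * (coeffMatrix χ₁)ᴴ).trace = 1 :=
    (trace_coeffMatrix_mul_conjTranspose χ₁ χ₁).trans h₁
  have horth' : (coeffMatrix χ₁ * (coeffMatrix χ₂)ᴴ).trace = 0 := by
    rw [trace_coeffMatrix_mul_conjTranspose, ← star_zero, ← horth]
    simp [inner4, star_sum, mul_comm]
  have hTr₁ : ptr1 (proj4 χ₁) = (1/2 : ℂ) • (1 : Matrix (Fin 2) (Fin 2) ℂ) := by
    rw [ptr1_proj4, conjTranspose_mul_self_eq_half_smul_one_of_masking hP hQ horth' hnorm,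
      transpose_smul, transpose_one]
  have hTr₂ : ptr2 (proj4 χ₁) = (1/2 : ℂ) • (1 : Matrix (Fin 2) (Fin 2) ℂ) := by
    rw [ptr2_proj4, mul_conjTranspose_self_eq_half_smul_one_of_masking hP hQ horth' hnorm]
  exact ⟨hTr₁, hTr₂, hmask1 ▸ hTr₁, hmask2 ▸ hTr₂⟩

end
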